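/- Let p ≥ 3 be an integer, E_∞ = -2 sqrt((p-1)/p), β > 0, and suppose q_** ∈ (sqrt((p-2)/p), 1) satisfies (1-q_**^2) q_**^(p-2) = 1/(β sqrt(p(p-1))). Then for every E < E_∞, ∂_q F_RS(E, q_**, β) > 0, where F_RS(E,q,β) = -β q^p E + (1/2) log(1-q^2) + (β^2/2)(1 - q^(2p) - p q^(2p-2)(1-q^2)). -/

import Mathlib

/-!
By the fixed-point equation, `1 / (1 - q²) = β √(p(p-1)) q^(p-2)` at `q = q_**`. Hence the
entropic term `q / (1 - q²)` and the interaction term `β² p (p-1) q^(2p-3) (1 - q²)` of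
`∂_q F_RS` both equal `β √(p(p-1)) q^(p-1)`, and the derivative collapses to
`β p q^(p-1) (E_∞ - E)`, which is positive for `E < E_∞`.
-/

open Real

noncomputable def freeEnergyRS (p : ℕ) (β E q : ℝ) : ℝ :=
  -β * q ^ p * E + (1 / 2) * log (1 - q ^ 2) +
    β ^ 2 / 2 * (1 - q ^ (2 * p) - (p : ℝ) * q ^ (2 * p - 2) * (1 - q ^ 2))

theorem hasDerivAt_freeEnergyRS {p : ℕ} (hp : 2 ≤ p) (β E : ℝ) {q : ℝ} (hq : 1 - q ^ 2 ≠ 0) :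
    HasDerivAt (freeEnergyRS p β E)
      (-β * p * q ^ (p - 1) * E - q / (1 - q ^ 2) -
        β ^ 2 * p * (p - 1) * q ^ (2 * p - 3) * (1 - q ^ 2)) q := by
  obtain ⟨k, rfl⟩ : ∃ k, p = k + 2 := ⟨p - 2, by omega⟩
  have hsq : HasDerivAt (fun x : ℝ => 1 - x ^ 2) (-(2 * q)) q := by
    simpa using (hasDerivAt_pow 2 q).const_sub 1
  have hF := ((((hasDerivAt_pow (k + 2) q).const_mul (-β)).mul_const E).add
    ((hsq.log hq).const_mul (1 / 2))).add
    ((((hasDerivAt_pow (2 * (k + 2)) q).const_sub 1).sub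
      (((hasDerivAt_pow (2 * (k + 2) - 2) q).const_mul ((k + 2 : ℕ) : ℝ)).mul hsq)).const_mul
        (β ^ 2 / 2))
  refine hF.congr_deriv ?_
  simp only [show k + 2 - 1 = k + 1 by omega, show 2 * (k + 2) - 3 = 2 * k + 1 by omega,
    show 2 * (k + 2) - 1 = 2 * k + 3 by omega, show 2 * (k + 2) - 2 = 2 * k + 2 by omega,
    show 2 * k + 2 - 1 = 2 * k + 1 by omega]
  push_cast
  field_simp
  ring

theorem sqrt_sub_one_div_self {p : ℝ} (hp : 0 ≤ p) : √((p - 1) / p) = √(p * (p - 1)) / p := by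
  rcases hp.eq_or_lt with rfl | hp
  · simp
  rw [show (p - 1) / p = p * (p - 1) / p ^ 2 by field_simp, sqrt_div' _ (sq_nonneg p),
    sqrt_sq hp.le]

theorem deriv_freeEnergyRS_of_fixedPoint {p : ℕ} (hp : 2 ≤ p) {β : ℝ} (hβ : β ≠ 0) (E : ℝ) {q : ℝ}
    (hfp : (1 - q ^ 2) * q ^ (p - 2) = 1 / (β * √((p : ℝ) * ((p : ℝ) - 1)))) :
    deriv (freeEnergyRS p β E) q = β * p * q ^ (p - 1) * (-2 * √(((p : ℝ) - 1) / p) - E) := by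
  obtain ⟨k, rfl⟩ : ∃ k, p = k + 2 := ⟨p - 2, by omega⟩
  rw [show k + 2 - 2 = k by omega] at hfp
  push_cast at hfp
  set s := √(((k : ℝ) + 2) * ((k : ℝ) + 2 - 1)) with hs_def
  have hs2 : s ^ 2 = ((k : ℝ) + 2) * ((k : ℝ) + 2 - 1) := sq_sqrt (by nlinarith)
  have hs : 0 < s := sqrt_pos.2 (by nlinarith)
  have hfp' : β * s * ((1 - q ^ 2) * q ^ k) = 1 := by rw [hfp]; field_simp
  have hq : 1 - q ^ 2 ≠ 0 := by rintro h; simp [h] at hfp'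
  rw [(hasDerivAt_freeEnergyRS hp β E hq).deriv, sqrt_sub_one_div_self (by positivity)]
  simp only [show k + 2 - 1 = k + 1 by omega, show 2 * (k + 2) - 3 = 2 * k + 1 by omega]
  push_cast
  rw [← hs_def]
  have hinv : q / (1 - q ^ 2) = β * s * q ^ (k + 1) := by
    field_simp
    linear_combination -q * hfp'
  rw [hinv]
  field_simp
  linear_combination (-s * q ^ (k + 1)) * hfp' + (β * q ^ (2 * k + 1) * (1 - q ^ 2)) * hs2

/-- If `q_** ∈ (sqrt((p-2)/p), 1)` satisfies `(1-q_**²) q_**^(p-2) = 1/(β sqrt(p(p-1)))`,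
then for every `E < E∞`, `∂_q F_RS(E, q_**, β) > 0`. -/
theorem stmt_14 (p : ℕ) (hp : 3 ≤ p) (β : ℝ) (hβ : 0 < β)
    (Einf : ℝ) (hEinf : Einf = -2 * Real.sqrt (((p : ℝ) - 1) / p))
    (qss : ℝ) (hqss : qss ∈ Set.Ioo (Real.sqrt (((p : ℝ) - 2) / p)) 1)
    (hfp : (1 - qss ^ 2) * qss ^ (p - 2) = 1 / (β * Real.sqrt ((p : ℝ) * ((p : ℝ) - 1))))
    (E : ℝ) (hE : E < Einf) :
    0 < deriv (fun q : ℝ => -β * q ^ p * E + (1 / 2) * Real.log (1 - q ^ 2) +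
        β ^ 2 / 2 * (1 - q ^ (2 * p) - (p : ℝ) * q ^ (2 * p - 2) * (1 - q ^ 2))) qss := by
  have hq : 0 < qss := (sqrt_nonneg _).trans_lt hqss.1
  change 0 < deriv (freeEnergyRS p β E) qss
  rw [deriv_freeEnergyRS_of_fixedPoint (by omega) hβ.ne' E hfp, ← hEinf]
  have hgap : 0 < Einf - E := sub_pos.2 hE
  positivity
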